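/- arXiv:2412.20797 — 4 statements merged into one kernel-verified Lean document; each statement's English description precedes it below -/
import Mathlib

section
/- Let A be a commutative ring and f(u) = Σ_{i=0}^n a_{2n-2i} u^{2i} a monic polynomial in u² over A (a₀ = 1). Define the signed splitting ring B = A[η₁,…,η_n]/I where I is generated by the relations a_{2i} = (-1)^i e_i(η₁²,…,η_n²) for i = 1,…,n. Then B is free of rank 2^n · n! as an A-module. -/
open MvPolynomial

/-- The `i`-th elementary symmetric polynomial evaluated at the squares of the variables. -/
noncomputable def esymmSq (A : Type*) [CommRing A] (n i : ℕ) : MvPolynomial (Fin n) A :=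
  ∑ s ∈ Finset.powersetCard i (Finset.univ : Finset (Fin n)), ∏ j ∈ s, X j ^ 2

/-- The ideal defining the signed splitting ring of the polynomial
`f(u) = Σ_{i=0}^n a_{2n-2i} u^{2i}` (with `a 0 = 1`): it is generated by the relations
`a_{2i} = (-1)^i e_i(η₁², …, η_n²)` for `i = 1, …, n`. -/
noncomputable def ssplitIdeal (A : Type*) [CommRing A] (n : ℕ) (a : ℕ → A) :
    Ideal (MvPolynomial (Fin n) A) :=
  Ideal.span (Set.range fun i : Fin n =>
    C (a (2 * (i.1 + 1))) - (-1 : MvPolynomial (Fin n) A) ^ (i.1 + 1) * esymmSq A n (i.1 + 1))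

/-- The signed splitting ring `SSplit_A(f) = A[η₁,…,η_n]/I`. -/
abbrev SSplit (A : Type*) [CommRing A] (n : ℕ) (a : ℕ → A) : Type _ :=
  MvPolynomial (Fin n) A ⧸ ssplitIdeal A n a

/-!
Adjoin one root first: `A₁ = A[u]/(f)` is free of rank `2n` over `A`, and over `A₁` the root `r`
splits off a factor, `f(u) = (u² - r²) g(u)` with `g` again monic in `u²`, of degree `2(n-1)`.
The relations `a_{2k} = (-1)^k e_k(η₁², …, η_n²)` with `η₁ = r` are equivalent to the relations
`b_{2k} = (-1)^k e_k(η₂², …, η_n²)` for the coefficients `b` of `g`, since both say that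
`Σ_{j ≤ k} a_{2j} r^{2(k-j)} = (-1)^k e_k(η₂², …, η_n²)`. Hence `SSplit_A(f) ≅ SSplit_{A₁}(g)`
as `A`-algebras, and induction gives rank `2n · 2^{n-1} (n-1)! = 2^n n!`.
-/

theorem Multiset.esymm_cons {R : Type*} [CommSemiring R] (x : R) (s : Multiset R) (k : ℕ) :
    (x ::ₘ s).esymm (k + 1) = s.esymm (k + 1) + x * s.esymm k := by
  simp [Multiset.esymm, Multiset.powersetCard_cons, Multiset.map_map, Multiset.sum_map_mul_left]

section Horner

variable {S : Type*} [CommSemiring S]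

noncomputable def hornerSum (c : ℕ → S) (x : S) (k : ℕ) : S :=
  ∑ j ∈ Finset.range (k + 1), c j * x ^ (k - j)

theorem hornerSum_zero (c : ℕ → S) (x : S) : hornerSum c x 0 = c 0 := by
  simp [hornerSum]

theorem hornerSum_succ (c : ℕ → S) (x : S) (k : ℕ) :
    hornerSum c x (k + 1) = x * hornerSum c x k + c (k + 1) := by
  rw [hornerSum, Finset.sum_range_succ, hornerSum, Finset.mul_sum, Nat.sub_self, pow_zero,
    mul_one]
  congr 1
  refine Finset.sum_congr rfl fun j hj => ?_
  rw [Nat.sub_add_comm (Finset.mem_range_succ_iff.1 hj), pow_succ]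
  ring

theorem map_hornerSum {T F : Type*} [CommSemiring T] [FunLike F S T] [RingHomClass F S T]
    (φ : F) (c : ℕ → S) (x : S) (k : ℕ) :
    φ (hornerSum c x k) = hornerSum (φ ∘ c) (φ x) k := by
  simp [hornerSum]

end Horner

theorem hornerSum_eq_of_sub {S : Type*} [CommRing S] {c s : ℕ → S} {x : S} {m : ℕ}
    (h₀ : c 0 = s 0) (h : ∀ k < m, c (k + 1) = s (k + 1) - x * s k) :
    ∀ k ≤ m, hornerSum c x k = s k := by
  intro k hk
  induction k with
  | zero => rw [hornerSum_zero, h₀]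
  | succ k ih => rw [hornerSum_succ, ih (by omega), h k hk]; ring

section SignedEsymm

variable {S : Type*} [CommRing S]

noncomputable def signedEsymmSq {n : ℕ} (g : Fin n → S) (k : ℕ) : S :=
  (Finset.univ.val.map fun i => -g i ^ 2).esymm k

theorem signedEsymmSq_zero {n : ℕ} (g : Fin n → S) : signedEsymmSq g 0 = 1 := by
  simp [signedEsymmSq, Multiset.esymm]

theorem signedEsymmSq_of_lt {n k : ℕ} (g : Fin n → S) (h : n < k) : signedEsymmSq g k = 0 := by
  rw [signedEsymmSq, Multiset.esymm, Multiset.powersetCard_eq_empty _ (by simpa using h)]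
  simp

theorem signedEsymmSq_succ {n : ℕ} (g : Fin (n + 1) → S) (k : ℕ) :
    signedEsymmSq g (k + 1)
      = signedEsymmSq (Fin.tail g) (k + 1) - g 0 ^ 2 * signedEsymmSq (Fin.tail g) k := by
  simp only [signedEsymmSq, Fin.univ_val_map, List.ofFn_succ, ← Multiset.cons_coe,
    Multiset.esymm_cons]
  simp [Fin.tail, sub_eq_add_neg]

theorem map_neg_one_pow_mul_esymmSq {A F : Type*} [CommRing A] {n : ℕ}
    [FunLike F (MvPolynomial (Fin n) A) S] [RingHomClass F (MvPolynomial (Fin n) A) S]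
    (ψ : F) (k : ℕ) :
    ψ ((-1) ^ k * esymmSq A n k) = signedEsymmSq (fun i => ψ (X i)) k := by
  have hneg : (Finset.univ.val.map fun i => -ψ (X i) ^ 2)
      = (Finset.univ.val.map fun i => ψ (X i) ^ 2).map Neg.neg := by
    rw [Multiset.map_map]; rfl
  rw [signedEsymmSq, hneg, Multiset.esymm_neg, Finset.esymm_map_val]
  simp [esymmSq]

end SignedEsymm

theorem ssplitIdeal_zero (A : Type*) [CommRing A] (a : ℕ → A) : ssplitIdeal A 0 a = ⊥ := by
  rw [ssplitIdeal, Set.range_eq_empty, Ideal.span_empty]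

namespace SSplit

variable {A S : Type*} [CommRing A] [CommRing S] {n : ℕ} {a : ℕ → A}

noncomputable def gen (a : ℕ → A) (i : Fin n) : SSplit A n a :=
  Ideal.Quotient.mk _ (X i)

theorem algebraMap_eq_signedEsymmSq (ha : a 0 = 1) {k : ℕ} (hk : k ≤ n) :
    algebraMap A (SSplit A n a) (a (2 * k)) = signedEsymmSq (gen a) k := by
  obtain _ | k := k
  · simp [ha, signedEsymmSq_zero]
  have hrel : C (a (2 * (k + 1))) - (-1) ^ (k + 1) * esymmSq A n (k + 1) ∈ ssplitIdeal A n a :=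
    Ideal.subset_span ⟨⟨k, hk⟩, rfl⟩
  rw [← Ideal.Quotient.eq] at hrel
  exact hrel.trans (map_neg_one_pow_mul_esymmSq _ _)

noncomputable def lift (φ : A →+* S) (g : Fin n → S)
    (hg : ∀ i : Fin n, φ (a (2 * (i + 1))) = signedEsymmSq g (i + 1)) :
    SSplit A n a →+* S :=
  Ideal.Quotient.lift _ (eval₂Hom φ g) fun p hp => RingHom.mem_ker.1 <| by
    refine (Ideal.span_le (I := RingHom.ker (eval₂Hom φ g))).2 ?_ hp
    rintro _ ⟨i, rfl⟩
    rw [SetLike.mem_coe, RingHom.mem_ker, map_sub, map_neg_one_pow_mul_esymmSq, eval₂Hom_C,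
      hg i]
    simp

variable (φ : A →+* S) (g : Fin n → S)
  (hg : ∀ i : Fin n, φ (a (2 * (i + 1))) = signedEsymmSq g (i + 1))

@[simp]
theorem lift_gen (i : Fin n) : lift φ g hg (gen a i) = g i := by
  rw [lift, gen, Ideal.Quotient.lift_mk, eval₂Hom_X']

@[simp]
theorem lift_algebraMap (c : A) : lift φ g hg (algebraMap A (SSplit A n a) c) = φ c :=
  (Ideal.Quotient.lift_mk _ _ _).trans (eval₂Hom_C φ g c)

theorem ringHom_ext {f₁ f₂ : SSplit A n a →+* S}
    (hA : f₁.comp (algebraMap A _) = f₂.comp (algebraMap A _))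
    (hgen : ∀ i, f₁ (gen a i) = f₂ (gen a i)) : f₁ = f₂ :=
  Ideal.Quotient.ringHom_ext <| MvPolynomial.ringHom_ext (RingHom.congr_fun hA) hgen

variable (a) in
noncomputable def zeroEquiv : SSplit A 0 a ≃ₐ[A] A :=
  (Ideal.quotientEquivAlgOfEq A (ssplitIdeal_zero A a)).trans <|
    (AlgEquiv.quotientBot A _).trans (isEmptyAlgEquiv A (Fin 0))

end SSplit

section SSplitPoly

variable {A : Type*} [CommRing A]

noncomputable def ssplitPoly (n : ℕ) (a : ℕ → A) : Polynomial A :=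
  hornerSum (fun j => Polynomial.C (a (2 * j))) (Polynomial.X ^ 2) n

theorem aeval_ssplitPoly {S : Type*} [CommRing S] [Algebra A S] (n : ℕ) (a : ℕ → A) (t : S) :
    Polynomial.aeval t (ssplitPoly n a)
      = hornerSum (fun j => algebraMap A S (a (2 * j))) (t ^ 2) n := by
  simp [ssplitPoly, map_hornerSum, Function.comp_def]

theorem ssplitPoly_monic_and_natDegree [Nontrivial A] {a : ℕ → A} (ha : a 0 = 1) (n : ℕ) :
    (ssplitPoly n a).Monic ∧ (ssplitPoly n a).natDegree = 2 * n := by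
  induction n with
  | zero => simp [ssplitPoly, hornerSum_zero, ha]
  | succ n ih =>
    have hmonic : (Polynomial.X ^ 2 * ssplitPoly n a).Monic := (Polynomial.monic_X_pow 2).mul ih.1
    have hdeg : (Polynomial.X ^ 2 * ssplitPoly n a).natDegree = 2 * (n + 1) := by
      rw [(Polynomial.monic_X_pow 2).natDegree_mul ih.1, ih.2, Polynomial.natDegree_X_pow]; ring
    rw [ssplitPoly, hornerSum_succ, ← ssplitPoly]
    refine ⟨hmonic.add_of_left ?_, by rw [Polynomial.natDegree_add_C, hdeg]⟩
    refine Polynomial.degree_C_le.trans_lt ?_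
    rw [Polynomial.degree_eq_natDegree hmonic.ne_zero, hdeg]
    exact_mod_cast Nat.succ_pos _

theorem nonempty_basis_adjoinRoot_ssplitPoly {a : ℕ → A} (ha : a 0 = 1) (n : ℕ) :
    Nonempty (Module.Basis (Fin (2 * n)) A (AdjoinRoot (ssplitPoly n a))) := by
  rcases subsingleton_or_nontrivial A with _ | _
  · exact ⟨default⟩
  obtain ⟨hmonic, hdeg⟩ := ssplitPoly_monic_and_natDegree ha n
  exact ⟨(AdjoinRoot.powerBasis' hmonic).basis.reindex (finCongr hdeg)⟩

/-- With `r` the root of `f = ssplitPoly (n + 1) a`, these are the coefficients of the quotient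
`f(u) / (u² - r²) = Σₖ b (2k) u^{2(n-k)}`; only the even-indexed values are relevant. -/
noncomputable def ssplitQuotCoeff (n : ℕ) (a : ℕ → A) : ℕ → AdjoinRoot (ssplitPoly (n + 1) a) :=
  fun k => hornerSum (fun j => algebraMap A _ (a (2 * j))) (AdjoinRoot.root _ ^ 2) (k / 2)

theorem ssplitQuotCoeff_two_mul (n : ℕ) (a : ℕ → A) (k : ℕ) :
    ssplitQuotCoeff n a (2 * k)
      = hornerSum (fun j => algebraMap A _ (a (2 * j))) (AdjoinRoot.root _ ^ 2) k := by
  rw [ssplitQuotCoeff, Nat.mul_div_cancel_left k two_pos]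

theorem ssplitQuotCoeff_zero {a : ℕ → A} (ha : a 0 = 1) (n : ℕ) : ssplitQuotCoeff n a 0 = 1 := by
  simp [ssplitQuotCoeff, hornerSum_zero, ha]

theorem ssplitQuotCoeff_two_mul_succ (n : ℕ) (a : ℕ → A) :
    ssplitQuotCoeff n a (2 * (n + 1)) = 0 := by
  rw [ssplitQuotCoeff_two_mul, ← aeval_ssplitPoly, AdjoinRoot.aeval_eq, AdjoinRoot.mk_self]

end SSplitPoly

namespace SSplit

variable {A : Type*} [CommRing A] {n : ℕ} {a : ℕ → A}

local notation "A₁" => AdjoinRoot (ssplitPoly (n + 1) a)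
local notation "B" => SSplit A (n + 1) a
local notation "B₁" => SSplit A₁ n (ssplitQuotCoeff n a)

theorem hornerSum_gen_zero_sq (ha : a 0 = 1) {k : ℕ} (hk : k ≤ n + 1) :
    hornerSum (fun j => algebraMap A B (a (2 * j))) ((gen a 0 : B) ^ 2) k
      = signedEsymmSq (Fin.tail (gen a)) k :=
  hornerSum_eq_of_sub (by simp [ha, signedEsymmSq_zero])
    (fun k hk => by rw [algebraMap_eq_signedEsymmSq ha hk, signedEsymmSq_succ]) k hk

theorem aeval_gen_zero_ssplitPoly (ha : a 0 = 1) :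
    Polynomial.aeval (gen a 0 : B) (ssplitPoly (n + 1) a) = 0 := by
  rw [aeval_ssplitPoly, hornerSum_gen_zero_sq ha le_rfl,
    signedEsymmSq_of_lt _ (Nat.lt_succ_self n)]

variable (n) in
noncomputable def rootHom (ha : a 0 = 1) : A₁ →+* B :=
  AdjoinRoot.lift (algebraMap A B) (gen a 0) (aeval_gen_zero_ssplitPoly ha)

@[simp]
theorem rootHom_root (ha : a 0 = 1) : rootHom n ha (AdjoinRoot.root _) = gen a 0 :=
  AdjoinRoot.lift_root _

@[simp]
theorem rootHom_of (ha : a 0 = 1) (c : A) :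
    rootHom n ha (AdjoinRoot.of _ c) = algebraMap A B c :=
  AdjoinRoot.lift_of _

theorem rootHom_ssplitQuotCoeff (ha : a 0 = 1) {k : ℕ} (hk : k ≤ n + 1) :
    rootHom n ha (ssplitQuotCoeff n a (2 * k)) = signedEsymmSq (Fin.tail (gen a)) k := by
  rw [ssplitQuotCoeff_two_mul, map_hornerSum, ← hornerSum_gen_zero_sq ha hk]
  simp [Function.comp_def]

theorem algebraMap_ssplitQuotCoeff (ha : a 0 = 1) {k : ℕ} (hk : k ≤ n + 1) :
    algebraMap A₁ B₁ (ssplitQuotCoeff n a (2 * k))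
      = signedEsymmSq (gen (ssplitQuotCoeff n a)) k := by
  rcases hk.lt_or_eq with hk | rfl
  · exact algebraMap_eq_signedEsymmSq (ssplitQuotCoeff_zero ha n) (Nat.lt_succ_iff.1 hk)
  · rw [ssplitQuotCoeff_two_mul_succ, map_zero, signedEsymmSq_of_lt _ (Nat.lt_succ_self n)]

theorem algebraMap_eq_signedEsymmSq_cons (ha : a 0 = 1) {k : ℕ} (hk : k ≤ n) :
    algebraMap A B₁ (a (2 * (k + 1)))
      = signedEsymmSq (Fin.cons (algebraMap A₁ B₁ (AdjoinRoot.root _)) (gen _)) (k + 1) := by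
  have hcoeff := ssplitQuotCoeff_two_mul n a (k + 1)
  rw [hornerSum_succ, ← ssplitQuotCoeff_two_mul] at hcoeff
  rw [signedEsymmSq_succ, Fin.tail_cons, Fin.cons_zero,
    ← algebraMap_ssplitQuotCoeff ha (by omega), ← algebraMap_ssplitQuotCoeff ha (by omega),
    ← map_pow, ← map_mul, ← map_sub, hcoeff, add_sub_cancel_left,
    IsScalarTower.algebraMap_apply A A₁ B₁]

variable (n) in
noncomputable def succEquiv (ha : a 0 = 1) : B ≃ₐ[A] B₁ := by
  have hrel (i : Fin (n + 1)) := algebraMap_eq_signedEsymmSq_cons ha i.is_le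
  let toB₁ : B →+* B₁ := lift (algebraMap A B₁) _ hrel
  let toB : B₁ →+* B := lift (rootHom n ha) (Fin.tail (gen a)) fun i =>
    rootHom_ssplitQuotCoeff ha (by omega)
  have hB₁ : toB₁.comp toB = RingHom.id B₁ := by
    refine ringHom_ext (AdjoinRoot.ringHom_ext (RingHom.ext fun c => ?_) ?_) fun i => ?_
    · simp [toB₁, toB, IsScalarTower.algebraMap_apply A A₁ B₁]
    · simp [toB₁, toB]
    · simp [toB₁, toB, Fin.tail]
  have hB : toB.comp toB₁ = RingHom.id B := by
    refine ringHom_ext (RingHom.ext fun c => ?_) (Fin.cases ?_ fun i => ?_)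
    · simp [toB₁, toB, IsScalarTower.algebraMap_apply A A₁ B₁]
    · simp [toB₁, toB]
    · simp [toB₁, toB, Fin.tail]
  exact AlgEquiv.ofRingEquiv (f := RingEquiv.ofRingHom toB₁ toB hB₁ hB) (lift_algebraMap _ _ hrel)

end SSplit

/-- The signed splitting ring `B = SSplit_A(f)` is a free `A`-module of rank `2^n · n!`. -/
theorem ssplit_free (A : Type*) [CommRing A] (n : ℕ) (a : ℕ → A) (ha : a 0 = 1) :
    Nonempty (Module.Basis (Fin (2 ^ n * n.factorial)) A (SSplit A n a)) := by
  induction n generalizing A with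
  | zero => exact ⟨(Module.Basis.singleton (Fin 1) A).map (SSplit.zeroEquiv a).symm.toLinearEquiv⟩
  | succ n ih =>
    obtain ⟨b₁⟩ := nonempty_basis_adjoinRoot_ssplitPoly ha (n + 1)
    obtain ⟨b₂⟩ := ih _ (ssplitQuotCoeff n a) (ssplitQuotCoeff_zero ha n)
    have hcard : 2 * (n + 1) * (2 ^ n * n.factorial) = 2 ^ (n + 1) * (n + 1).factorial := by
      rw [pow_succ, Nat.factorial_succ]; ring
    exact ⟨((b₁.smulTower b₂).map (SSplit.succEquiv n ha).symm.toLinearEquiv).reindex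
      (finProdFinEquiv.trans (finCongr hcard))⟩
end

section
/- Let V be an n-dimensional complex vector space, f : V → V* skew-symmetric, g : V* → V symmetric with rank g ≤ 2r where 2r ≤ n. Then the characteristic polynomial of g∘f : V → V is divisible by u^{n−2r} and the quotient is an even polynomial (a polynomial in u²). -/
/-!
Rank-nullity gives `dim ker (g ∘ f) ≥ n - 2r`, and the geometric multiplicity of the
eigenvalue `0` bounds its algebraic one, so `u ^ (n - 2r)` divides the characteristic
polynomial `χ`. In a basis of `V` and its dual basis, `f` and `g` have matrices `F` skew and
`G` symmetric, so `(GF)ᵀ = -FG`; as `GF` and `FG` share their characteristic polynomial,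
`χ(u) = (-1)ⁿ χ(-u)`. Since `n - 2r ≡ n (mod 2)`, the cofactor of `u ^ (n - 2r)` is then
invariant under `u ↦ -u`, i.e. a polynomial in `u²`.
-/

open Polynomial

namespace Polynomial

variable {R : Type*} [CommRing R]

theorem coeff_comp_neg_X (p : R[X]) (k : ℕ) : (p.comp (-X)).coeff k = (-1) ^ k * p.coeff k := by
  rw [← neg_one_mul (X : R[X]), ← C_1, ← C_neg, comp_C_mul_X_coeff, mul_comm]

theorem exists_eq_comp_X_sq_of_comp_neg_X_eq [IsAddTorsionFree R] {s : R[X]}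
    (hs : s.comp (-X) = s) : ∃ q : R[X], s = q.comp (X ^ 2) := by
  refine ⟨contract 2 s, ?_⟩
  ext k
  rw [← expand_eq_comp_X_pow, coeff_expand two_pos, coeff_contract two_ne_zero]
  split_ifs with hk
  · rw [Nat.div_mul_cancel hk]
  · have hodd : Odd k := Nat.odd_iff.mpr (Nat.two_dvd_ne_zero.mp hk)
    have := congrArg (coeff · k) hs
    simp only [coeff_comp_neg_X, hodd.neg_one_pow, neg_one_mul] at this
    exact self_eq_neg.mp this.symm

theorem exists_eq_X_pow_mul_comp_X_sq [IsAddTorsionFree R] {p : R[X]} {m : ℕ}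
    (hdvd : X ^ m ∣ p) (hp : p = (-1) ^ m * p.comp (-X)) :
    ∃ q : R[X], p = X ^ m * q.comp (X ^ 2) := by
  obtain ⟨s, rfl⟩ := hdvd
  have hs : s.comp (-X) = s := by
    have hsign : ((-1) ^ m * (-X) ^ m : R[X]) = X ^ m := by rw [← mul_pow, neg_one_mul, neg_neg]
    rw [mul_comp, X_pow_comp, ← mul_assoc, hsign] at hp
    exact ((isRegular_X_pow m).left.eq_iff.mp hp).symm
  obtain ⟨q, rfl⟩ := exists_eq_comp_X_sq_of_comp_neg_X_eq hs
  exact ⟨q, rfl⟩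

end Polynomial

namespace Matrix

variable {R ι : Type*} [CommRing R] [Fintype ι] [DecidableEq ι]

theorem charpoly_neg (M : Matrix ι ι R) :
    (-M).charpoly = (-1) ^ Fintype.card ι * M.charpoly.comp (-X) := by
  have hmat : (charmatrix M).map (compRingHom (-X)) = -charmatrix (-M) := by
    ext i j
    rcases eq_or_ne i j with rfl | h
    · simp [charmatrix_apply_eq, sub_eq_add_neg, add_comm]
    · simp [charmatrix_apply_ne _ _ _ h]
  rw [charpoly, ← neg_neg (charmatrix (-M)), ← hmat, det_neg, Fintype.card, charpoly,
    ← coe_compRingHom_apply, RingHom.map_det]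
  rfl

theorem charpoly_mul_eq_neg_one_pow_mul_comp_neg_X {F G : Matrix ι ι R} (hF : Fᵀ = -F)
    (hG : G.IsSymm) : (G * F).charpoly = (-1) ^ Fintype.card ι * (G * F).charpoly.comp (-X) := by
  calc (G * F).charpoly = ((G * F)ᵀ).charpoly := (charpoly_transpose _).symm
    _ = (-(F * G)).charpoly := by rw [transpose_mul, hF, hG.eq, neg_mul]
    _ = _ := by rw [charpoly_neg, charpoly_mul_comm]

end Matrix

namespace LinearMap

open Matrix

theorem charpoly_comp_eq_neg_one_pow_mul_comp_neg_X {R M : Type*} [CommRing R]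
    [StrongRankCondition R] [AddCommGroup M] [Module R M] [Module.Free R M] [Module.Finite R M]
    {f : M →ₗ[R] Module.Dual R M} (hf : ∀ v w, f v w = -f w v)
    {g : Module.Dual R M →ₗ[R] M} (hg : ∀ φ ψ : Module.Dual R M, φ (g ψ) = ψ (g φ)) :
    (g ∘ₗ f).charpoly = (-1) ^ Module.finrank R M * (g ∘ₗ f).charpoly.comp (-X) := by
  classical
  let b := Module.Free.chooseBasis R M
  have hF : (toMatrix b b.dualBasis f)ᵀ = -toMatrix b b.dualBasis f := by
    ext i j
    simpa [toMatrix_apply] using hf (b i) (b j)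
  have hG : (toMatrix b.dualBasis b g).IsSymm := by
    ext i j
    simp only [transpose_apply, toMatrix_apply]
    rw [← Module.Basis.dualBasis_apply, ← Module.Basis.dualBasis_apply]
    exact hg _ _
  rw [← charpoly_toMatrix _ b, toMatrix_comp b b.dualBasis b,
    Module.finrank_eq_card_chooseBasisIndex]
  exact Matrix.charpoly_mul_eq_neg_one_pow_mul_comp_neg_X hF hG

theorem X_pow_finrank_ker_dvd_charpoly {K M : Type*} [Field K] [AddCommGroup M] [Module K M]
    [FiniteDimensional K M] (φ : Module.End K M) :
    X ^ Module.finrank K (ker φ) ∣ φ.charpoly := by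
  have hle := finrank_eigenspace_le φ 0
  rw [Module.End.eigenspace_zero] at hle
  have hroot := pow_rootMultiplicity_dvd φ.charpoly 0
  rw [map_zero, sub_zero] at hroot
  exact (pow_dvd_pow X hle).trans hroot

end LinearMap

/-- Let `V` be an `n`-dimensional complex vector space, `f : V → V*` skew-symmetric, and
`g : V* → V` symmetric of rank `≤ 2r` with `2r ≤ n`.  Then the characteristic polynomial of
`g ∘ f : V → V` is divisible by `u^{n-2r}`, and the quotient is an even polynomial
(a polynomial in `u²`). -/
theorem charpoly_gf_divisible (V : Type*) [AddCommGroup V] [Module ℂ V]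
    [FiniteDimensional ℂ V] (n r : ℕ) (hdim : Module.finrank ℂ V = n)
    (hr : 2 * r ≤ n)
    (f : V →ₗ[ℂ] Module.Dual ℂ V) (hf : ∀ v w : V, f v w = -(f w v))
    (g : Module.Dual ℂ V →ₗ[ℂ] V) (hg : ∀ φ ψ : Module.Dual ℂ V, φ (g ψ) = ψ (g φ))
    (hrkg : Module.finrank ℂ (LinearMap.range g) ≤ 2 * r) :
    ∃ q : Polynomial ℂ,
      LinearMap.charpoly (g ∘ₗ f) = X ^ (n - 2 * r) * q.comp (X ^ 2) := by
  have hker : n - 2 * r ≤ Module.finrank ℂ (LinearMap.ker (g ∘ₗ f)) := by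
    have hrange := (Submodule.finrank_mono (LinearMap.range_comp_le_range f g)).trans hrkg
    have := LinearMap.finrank_range_add_finrank_ker (g ∘ₗ f)
    omega
  have hsign : (-1 : ℂ[X]) ^ n = (-1) ^ (n - 2 * r) := by
    conv_lhs => rw [← Nat.sub_add_cancel hr, pow_add, pow_mul, neg_one_sq, one_pow, mul_one]
  refine exists_eq_X_pow_mul_comp_X_sq
    ((pow_dvd_pow X hker).trans (LinearMap.X_pow_finrank_ker_dvd_charpoly _)) ?_
  rw [← hsign, ← hdim]
  exact LinearMap.charpoly_comp_eq_neg_one_pow_mul_comp_neg_X hf hg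
end

section
/- Let E = ℂ^{2r} with nondegenerate symmetric bilinear form given by J = [[0, I_r],[I_r, 0]], let D be a symmetric 2r × 2r complex matrix written in r × r blocks as D = [[D₁, D₂],[D₂ᵀ, 0]]. Set ψ = [[½D₁, I_r],[D₂ᵀ, 0]]. Then D = ψ J ψᵀ and det(ψ) = ± det(D₂). -/
open Matrix

namespace Matrix

variable {R : Type*} [CommRing R] {m m' n : Type*} [Fintype n] [DecidableEq n]

theorem fromBlocks_mul_fromBlocks_zero_one_one_zero_mul_transpose
    (A B : Matrix m n R) (C D : Matrix m' n R) :
    fromBlocks A B C D * (fromBlocks 0 1 1 0 : Matrix (n ⊕ n) (n ⊕ n) R) *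
        (fromBlocks A B C D)ᵀ =
      fromBlocks (B * Aᵀ + A * Bᵀ) (B * Cᵀ + A * Dᵀ) (D * Aᵀ + C * Bᵀ) (D * Cᵀ + C * Dᵀ) := by
  simp [fromBlocks_transpose, fromBlocks_multiply]

/-- Two block shears turn `[[0, 1], [1, 0]]` into the block triangular `[[-1, 0], [1, 1]]`. -/
theorem det_fromBlocks_zero_one_one_zero :
    (fromBlocks 0 1 1 0 : Matrix (n ⊕ n) (n ⊕ n) R).det = (-1) ^ Fintype.card n := by
  have shear : fromBlocks 1 (-1) 0 1 * fromBlocks 1 0 1 1 * fromBlocks 0 1 1 0 =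
      (fromBlocks (-1) 0 1 1 : Matrix (n ⊕ n) (n ⊕ n) R) := by
    simp [fromBlocks_multiply]
  simpa [det_fromBlocks_zero₂₁, det_fromBlocks_zero₁₂, det_neg] using congrArg det shear

theorem det_fromBlocks_one₁₂_zero₂₂ (A C : Matrix n n R) :
    (fromBlocks A 1 C 0).det = (-1) ^ Fintype.card n * C.det := by
  have swap : fromBlocks 1 A 0 C * fromBlocks 0 1 1 0 = fromBlocks A 1 C 0 := by
    simp [fromBlocks_multiply]
  rw [← swap, det_mul, det_fromBlocks_zero₂₁, det_fromBlocks_zero_one_one_zero, det_one, one_mul,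
    mul_comm]

end Matrix

/-- Let `E = ℂ^{2r}` with the split symmetric bilinear form `J = [[0, I],[I, 0]]`, and let
`D = [[D₁, D₂],[D₂ᵀ, 0]]` be a symmetric `2r × 2r` matrix (so `D₁ᵀ = D₁`).  Set
`ψ = [[½D₁, I],[D₂ᵀ, 0]]`.  Then `D = ψ J ψᵀ` and `det ψ = ± det D₂`. -/
theorem symmetric_factors_through_split_form (r : ℕ) (D₁ D₂ : Matrix (Fin r) (Fin r) ℂ)
    (hD₁ : D₁ᵀ = D₁) :
    fromBlocks D₁ D₂ D₂ᵀ 0 =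
      fromBlocks ((2 : ℂ)⁻¹ • D₁) 1 D₂ᵀ 0 * fromBlocks 0 1 1 0 *
        (fromBlocks ((2 : ℂ)⁻¹ • D₁) 1 D₂ᵀ 0)ᵀ ∧
    ((fromBlocks ((2 : ℂ)⁻¹ • D₁) 1 D₂ᵀ (0 : Matrix (Fin r) (Fin r) ℂ)).det = D₂.det ∨
     (fromBlocks ((2 : ℂ)⁻¹ • D₁) 1 D₂ᵀ (0 : Matrix (Fin r) (Fin r) ℂ)).det = -D₂.det) := by
  refine ⟨?_, ?_⟩
  · have half_add_half : (2 : ℂ)⁻¹ • D₁ + (2 : ℂ)⁻¹ • D₁ = D₁ := by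
      rw [← add_smul]; norm_num
    rw [fromBlocks_mul_fromBlocks_zero_one_one_zero_mul_transpose]
    simp [transpose_smul, hD₁, half_add_half]
  · rw [det_fromBlocks_one₁₂_zero₂₂, det_transpose]
    rcases neg_one_pow_eq_or ℂ (Fintype.card (Fin r)) with h | h <;> rw [h] <;> simp
end

section
/- Fix integers a ≥ 1. The map (b, α) ↦ P(a, b, α) = (b+α₁,…,b+α_b, b,…,b (a times), α₁ᵀ,…,α_{α₁}ᵀ), defined on pairs of a nonnegative integer b and a partition α with at most b parts, is injective into the set of partitions. -/
/-!
Entries of `P(a, b, α)` larger than `b` are exactly the `b + αᵢ` (the parts of `αᵀ` are at most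
`ℓ(α) ≤ b`), so there are `ℓ(α) ≤ b` of them, while `P(a, b, α)` has at least `b` entries `≥ b`.
Comparing the number of entries exceeding `b₂` then gives `b₁ ≤ b₂`, and by symmetry `b₁ = b₂`;
subtracting `b` from the entries exceeding `b` recovers `α` up to order, hence exactly since it is
sorted.
-/

/-- The conjugate (transpose) of a partition given as a list: the `j`-th column length
`αᵀ_j = #{i : α_i ≥ j}` for `j = 1, …, α₁`. -/
def conjList (α : List ℕ) : List ℕ :=
  (List.range (α.foldr max 0)).map fun j => (α.filter fun x => j < x).length

/-- The partition `P(a, b, α) = (b+α₁, …, b+α_b, b, …, b (a times), αᵀ₁, …, αᵀ_{α₁})`, as a list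
(where `α` is padded with zeros to have exactly `b` parts). -/
def Ppart (a b : ℕ) (α : List ℕ) : List ℕ :=
  ((List.range b).map fun i => b + α.getD i 0) ++ List.replicate a b ++ conjList α

/-- A list of natural numbers represents a partition when it is weakly decreasing with positive
entries. -/
def IsPartitionList (α : List ℕ) : Prop :=
  α.Pairwise (· ≥ ·) ∧ ∀ x ∈ α, 0 < x

theorem List.map_getD_range_eq_append_replicate {α : Type*} (l : List α) (d : α) {n : ℕ}
    (hn : l.length ≤ n) :
    (List.range n).map (l.getD · d) = l ++ List.replicate (n - l.length) d := by
  refine List.ext_getElem (by simp; omega) fun i hi _ => ?_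
  simp only [List.getElem_map, List.getElem_range, List.getD_eq_getElem?_getD,
    List.getElem_append, List.getElem_replicate]
  split_ifs with h <;> simp [h]

theorem List.perm_filter_of_coe_filter_eq {α : Type*} {l₁ l₂ : List α} {p q : α → Prop}
    [DecidablePred p] [DecidablePred q] (hpq : ∀ x, q x → p x)
    (h : Multiset.filter p (l₁ : Multiset α) = Multiset.filter p ↑l₂) :
    (l₁.filter (q ·)).Perm (l₂.filter (q ·)) := by
  have hq (l : List α) :
      Multiset.filter q (Multiset.filter p (l : Multiset α)) = ↑(l.filter (q ·)) := by
    rw [Multiset.filter_filter, Multiset.filter_congr fun x _ => and_iff_left_of_imp (hpq x),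
      Multiset.filter_coe]
  exact Multiset.coe_eq_coe.1 (by rw [← hq, ← hq, h])

lemma conjList_le_length {α : List ℕ} {x : ℕ} (hx : x ∈ conjList α) : x ≤ α.length := by
  simp only [conjList, List.mem_map, List.mem_range] at hx
  obtain ⟨j, -, rfl⟩ := hx
  exact List.length_filter_le _ _

lemma Ppart_eq_of_length_le (a : ℕ) {b : ℕ} {α : List ℕ} (hl : α.length ≤ b) :
    Ppart a b α =
      (α ++ List.replicate (b - α.length) 0).map (b + ·) ++ List.replicate a b ++ conjList α := by
  rw [Ppart, ← List.map_getD_range_eq_append_replicate α 0 hl, List.map_map]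
  rfl

lemma le_length_filter_lt_Ppart (a : ℕ) {b c : ℕ} (α : List ℕ) (hc : c < b) :
    b ≤ ((Ppart a b α).filter (c < ·)).length := by
  calc b = (((List.range b).map fun i => b + α.getD i 0).filter (c < ·)).length := by
        rw [List.filter_eq_self.2 fun x hx => by
          obtain ⟨i, -, rfl⟩ := List.mem_map.1 hx
          simp only [decide_eq_true_eq]
          omega]
        simp
    _ ≤ _ := by
        rw [Ppart, List.append_assoc, List.filter_append, List.length_append]; omega

lemma filter_lt_Ppart (a : ℕ) {b : ℕ} {α : List ℕ} (hα : ∀ x ∈ α, 0 < x) (hl : α.length ≤ b) :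
    (Ppart a b α).filter (b < ·) = α.map (b + ·) := by
  have hconj : (conjList α).filter (b < ·) = [] :=
    List.filter_eq_nil_iff.2 fun x hx => by
      have := conjList_le_length hx
      simp only [decide_eq_true_eq]
      omega
  rw [Ppart_eq_of_length_le a hl, List.filter_append, List.filter_append, hconj, List.filter_map]
  have hpos : α.filter (0 < ·) = α := List.filter_eq_self.2 (by simpa using hα)
  simp [Function.comp_def, hpos]

lemma le_of_filter_pos_Ppart_eq (a : ℕ) {b₁ b₂ : ℕ} {α₁ α₂ : List ℕ}
    (hα₂ : ∀ x ∈ α₂, 0 < x) (hl₂ : α₂.length ≤ b₂)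
    (heq : Multiset.filter (fun x => 0 < x) (↑(Ppart a b₁ α₁) : Multiset ℕ) =
           Multiset.filter (fun x => 0 < x) (↑(Ppart a b₂ α₂) : Multiset ℕ)) :
    b₁ ≤ b₂ := by
  by_contra! h
  refine lt_irrefl b₁ ?_
  calc b₁ ≤ ((Ppart a b₁ α₁).filter (b₂ < ·)).length := le_length_filter_lt_Ppart a α₁ h
    _ = ((Ppart a b₂ α₂).filter (b₂ < ·)).length :=
        (List.perm_filter_of_coe_filter_eq (fun _ hx => Nat.zero_lt_of_lt hx) heq).length_eq
    _ = α₂.length := by rw [filter_lt_Ppart a hα₂ hl₂, List.length_map]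
    _ < b₁ := by omega

theorem Ppart_injective_general (a : ℕ)
    (b₁ b₂ : ℕ) (α₁ α₂ : List ℕ)
    (h₁ : IsPartitionList α₁) (hl₁ : α₁.length ≤ b₁)
    (h₂ : IsPartitionList α₂) (hl₂ : α₂.length ≤ b₂)
    (heq : Multiset.filter (fun x => 0 < x) (↑(Ppart a b₁ α₁) : Multiset ℕ) =
           Multiset.filter (fun x => 0 < x) (↑(Ppart a b₂ α₂) : Multiset ℕ)) :
    b₁ = b₂ ∧ α₁ = α₂ := by
  obtain rfl : b₁ = b₂ := le_antisymm (le_of_filter_pos_Ppart_eq a h₂.2 hl₂ heq)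
    (le_of_filter_pos_Ppart_eq a h₁.2 hl₁ heq.symm)
  have hperm :=
    List.perm_filter_of_coe_filter_eq (q := (b₁ < ·)) (fun _ hx => Nat.zero_lt_of_lt hx) heq
  rw [filter_lt_Ppart a h₁.2 hl₁, filter_lt_Ppart a h₂.2 hl₂,
    List.map_perm_map_iff (add_right_injective b₁)] at hperm
  exact ⟨rfl, hperm.eq_of_pairwise' h₁.1 h₂.1⟩

/-- For fixed `a ≥ 1`, the map `(b, α) ↦ P(a, b, α)`, defined on pairs of a nonnegative integer
`b` and a partition `α` with at most `b` parts, is injective into the set of partitions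
(partitions being compared as multisets of positive parts). -/
theorem Ppart_injective (a : ℕ) (ha : 1 ≤ a)
    (b₁ b₂ : ℕ) (α₁ α₂ : List ℕ)
    (h₁ : IsPartitionList α₁) (hl₁ : α₁.length ≤ b₁)
    (h₂ : IsPartitionList α₂) (hl₂ : α₂.length ≤ b₂)
    (heq : Multiset.filter (fun x => 0 < x) (↑(Ppart a b₁ α₁) : Multiset ℕ) =
           Multiset.filter (fun x => 0 < x) (↑(Ppart a b₂ α₂) : Multiset ℕ)) :
    b₁ = b₂ ∧ α₁ = α₂ :=
  Ppart_injective_general a b₁ b₂ α₁ α₂ h₁ hl₁ h₂ hl₂ heq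
end
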